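/- arXiv:2107.05766 — 2 statements merged into one kernel-verified Lean document; each statement's English description precedes it below -/
import Mathlib

section
/- Let $A, \widehat A \in \mathbb{R}^{p \times K}$, let $s \in [K]$, and define the restricted $\ell_1 \to \ell_1$ condition number $\kappa(A,s) = \min_{S \subseteq [K], |S| \le s} \min_{v \in \mathcal{C}(S)} \|Av\|_1/\|v\|_1$, where $\mathcal{C}(S) = \{v \ne 0 : \|v_S\|_1 \ge \|v_{S^c}\|_1\}$. Then $\kappa(\widehat A, s) \ge \kappa(A, s) - \|\widehat A - A\|_{1,\infty}$, where $\|M\|_{1,\infty} = \max_{k} \|M_{\cdot k}\|_1$ is the maximum column $\ell_1$ norm. -/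
open Finset Matrix

/-! For every admissible `v`, writing `A = Â - (Â - A)` and bounding `‖(Â - A) v‖₁` column by column
gives `‖A v‖₁ / ‖v‖₁ ≤ ‖Â v‖₁ / ‖v‖₁ + ‖Â - A‖_{1,∞}`; taking infima over the same cone gives the
claim. When the cone is empty both infima are `0` and the norm is nonnegative. -/

variable {ι κ : Type*} [Fintype ι] [Fintype κ]

theorem sum_abs_mulVec_le (M : Matrix ι κ ℝ) (v : κ → ℝ) {c : ℝ}
    (hM : ∀ k, ∑ j, |M j k| ≤ c) : ∑ j, |(M *ᵥ v) j| ≤ c * ∑ k, |v k| := by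
  calc ∑ j, |(M *ᵥ v) j| ≤ ∑ j, ∑ k, |M j k| * |v k| := by
        gcongr with j
        simpa only [mulVec, dotProduct, abs_mul] using
          abs_sum_le_sum_abs (fun k => M j k * v k) univ
    _ = ∑ k, (∑ j, |M j k|) * |v k| := by rw [sum_comm]; simp only [sum_mul]
    _ ≤ ∑ k, c * |v k| := by gcongr with k; exact hM k
    _ = c * ∑ k, |v k| := (mul_sum _ _ _).symm

theorem sum_abs_mulVec_le_add (A B : Matrix ι κ ℝ) (v : κ → ℝ) {c : ℝ}
    (hc : ∀ k, ∑ j, |B j k - A j k| ≤ c) :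
    ∑ j, |(A *ᵥ v) j| ≤ ∑ j, |(B *ᵥ v) j| + c * ∑ k, |v k| := by
  have hA : A *ᵥ v = B *ᵥ v - (B - A) *ᵥ v := by rw [Matrix.sub_mulVec, sub_sub_cancel]
  calc ∑ j, |(A *ᵥ v) j| ≤ ∑ j, (|(B *ᵥ v) j| + |((B - A) *ᵥ v) j|) := by
        gcongr with j
        rw [hA]
        exact abs_sub _ _
    _ ≤ ∑ j, |(B *ᵥ v) j| + c * ∑ k, |v k| := by
        rw [sum_add_distrib]
        gcongr
        exact sum_abs_mulVec_le _ _ hc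

noncomputable def l1Ratio (M : Matrix ι κ ℝ) (v : κ → ℝ) : ℝ :=
  (∑ j, |(M *ᵥ v) j|) / ∑ k, |v k|

theorem l1Ratio_nonneg (M : Matrix ι κ ℝ) (v : κ → ℝ) : 0 ≤ l1Ratio M v := by
  unfold l1Ratio; positivity

theorem l1Ratio_le_add (A B : Matrix ι κ ℝ) {v : κ → ℝ} (hv : v ≠ 0) {c : ℝ}
    (hc : ∀ k, ∑ j, |B j k - A j k| ≤ c) : l1Ratio A v ≤ l1Ratio B v + c := by
  have hpos : 0 < ∑ k, |v k| := by
    obtain ⟨k, hk⟩ := Function.ne_iff.mp hv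
    exact sum_pos' (fun k _ => abs_nonneg _) ⟨k, mem_univ k, abs_pos.mpr hk⟩
  rw [l1Ratio, l1Ratio, div_add' _ _ _ hpos.ne', div_le_div_iff_of_pos_right hpos]
  exact sum_abs_mulVec_le_add A B v hc

/-- The union `⋃_{|S| ≤ s} 𝒞(S)` of the paper's cones. -/
def restrictedCone [DecidableEq κ] (s : ℕ) : Set (κ → ℝ) :=
  {v | v ≠ 0 ∧ ∃ S : Finset κ, S.card ≤ s ∧ ∑ k ∈ Sᶜ, |v k| ≤ ∑ k ∈ S, |v k|}

theorem setOf_exists_cone_eq_image [DecidableEq κ] (M : Matrix ι κ ℝ) (s : ℕ) :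
    {y | ∃ S : Finset κ, S.card ≤ s ∧ ∃ v : κ → ℝ, v ≠ 0 ∧
        (∑ k ∈ Sᶜ, |v k|) ≤ (∑ k ∈ S, |v k|) ∧
        y = (∑ j, |∑ k, M j k * v k|) / (∑ k, |v k|)} = l1Ratio M '' restrictedCone s := by
  ext y
  constructor
  · rintro ⟨S, hS, v, hv, hcone, rfl⟩
    exact ⟨v, ⟨hv, S, hS, hcone⟩, rfl⟩
  · rintro ⟨v, ⟨hv, S, hS, hcone⟩, rfl⟩
    exact ⟨S, hS, v, hv, hcone, rfl⟩

theorem csInf_image_sub_le_csInf_image {α : Type*} {C : Set α} {f g : α → ℝ} {c : ℝ}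
    (hc : 0 ≤ c) (hf : BddBelow (f '' C)) (hfg : ∀ x ∈ C, f x ≤ g x + c) :
    sInf (f '' C) - c ≤ sInf (g '' C) := by
  rcases C.eq_empty_or_nonempty with rfl | hC
  · simpa using hc
  refine le_csInf (hC.image g) ?_
  rintro _ ⟨x, hx, rfl⟩
  linarith [csInf_le hf ⟨x, hx, rfl⟩, hfg x hx]

theorem kappa_perturbation_general {p K : ℕ} (s : ℕ)
    (A Ah : Matrix (Fin p) (Fin K) ℝ)
    (κA κAh nrm : ℝ)
    (hκA : κA = sInf {y | ∃ S : Finset (Fin K), S.card ≤ s ∧ ∃ v : Fin K → ℝ, v ≠ 0 ∧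
        (∑ k ∈ Sᶜ, |v k|) ≤ (∑ k ∈ S, |v k|) ∧
        y = (∑ j, |∑ k, A j k * v k|) / (∑ k, |v k|)})
    (hκAh : κAh = sInf {y | ∃ S : Finset (Fin K), S.card ≤ s ∧ ∃ v : Fin K → ℝ, v ≠ 0 ∧
        (∑ k ∈ Sᶜ, |v k|) ≤ (∑ k ∈ S, |v k|) ∧
        y = (∑ j, |∑ k, Ah j k * v k|) / (∑ k, |v k|)})
    (hnrm : nrm = ⨆ k : Fin K, ∑ j, |Ah j k - A j k|) :
    κAh ≥ κA - nrm := by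
  have hcol : ∀ k, ∑ j, |Ah j k - A j k| ≤ nrm := fun k =>
    hnrm ▸ le_ciSup (f := fun k => ∑ j, |Ah j k - A j k|) (Set.finite_range _).bddAbove k
  have hnrm_nonneg : 0 ≤ nrm := hnrm ▸ Real.iSup_nonneg fun k => by positivity
  rw [hκA, hκAh, setOf_exists_cone_eq_image, setOf_exists_cone_eq_image]
  exact csInf_image_sub_le_csInf_image hnrm_nonneg
    ⟨0, Set.forall_mem_image.mpr fun v _ => l1Ratio_nonneg A v⟩
    fun v hv => l1Ratio_le_add A Ah hv.1 hcol

/-- the restricted ℓ₁→ℓ₁ condition number satisfies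
`κ(Â,s) ≥ κ(A,s) − ‖Â − A‖_{1,∞}`. -/
theorem kappa_perturbation {p K : ℕ} (hK : 0 < K) (s : ℕ) (hs : 1 ≤ s) (hsK : s ≤ K)
    (A Ah : Matrix (Fin p) (Fin K) ℝ)
    (κA κAh nrm : ℝ)
    (hκA : κA = sInf {y | ∃ S : Finset (Fin K), S.card ≤ s ∧ ∃ v : Fin K → ℝ, v ≠ 0 ∧
        (∑ k ∈ Sᶜ, |v k|) ≤ (∑ k ∈ S, |v k|) ∧
        y = (∑ j, |∑ k, A j k * v k|) / (∑ k, |v k|)})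
    (hκAh : κAh = sInf {y | ∃ S : Finset (Fin K), S.card ≤ s ∧ ∃ v : Fin K → ℝ, v ≠ 0 ∧
        (∑ k ∈ Sᶜ, |v k|) ≤ (∑ k ∈ S, |v k|) ∧
        y = (∑ j, |∑ k, Ah j k * v k|) / (∑ k, |v k|)})
    (hnrm : nrm = ⨆ k : Fin K, ∑ j, |Ah j k - A j k|) :
    κAh ≥ κA - nrm :=
  kappa_perturbation_general s A Ah κA κAh nrm hκA hκAh hnrm
end

section
/- Let $A \in \mathbb{R}^{p \times K}$, $\Pi_j > 0$ for $j \in \overline{J}$ with $\sum_{j \in \overline{J}} \Pi_j = 1$, and let $H = \sum_{j \in \overline{J}} \Pi_j^{-1} A_{j\cdot} A_{j\cdot}^\top$ be invertible with $\kappa := \min_{v \ne 0} \|A_{\overline{J}} v\|_1 / \|v\|_1 > 0$. Then for every $u \in \mathbb{R}^K$, $\|H^{-1/2} u\|_1 \le \kappa^{-1} \|u\|_2$. -/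
open Finset Matrix

/-!
With `w = H^{-1/2} u` we have `wᵀ H w = ‖u‖₂²`. Writing `wᵀ H w = ∑_j (A w)_j² / Π_j`, the
Cauchy–Schwarz inequality in Sedrakyan's form together with `∑_j Π_j = 1` bounds it below by
`(∑_j |(A w)_j|)² ≥ κ² ‖w‖₁²`.
-/

namespace Matrix

variable {m n : Type*} [Fintype n]

/-- The constant `κ` of the statement, for `s = J̄`. -/
noncomputable def l1MinRatio (A : Matrix m n ℝ) (s : Finset m) : ℝ :=
  sInf {y | ∃ v : n → ℝ, v ≠ 0 ∧ y = (∑ j ∈ s, |∑ k, A j k * v k|) / (∑ k, |v k|)}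

theorem l1MinRatio_nonneg (A : Matrix m n ℝ) (s : Finset m) : 0 ≤ l1MinRatio A s := by
  refine Real.sInf_nonneg ?_
  rintro _ ⟨v, -, rfl⟩
  positivity

theorem l1MinRatio_mul_le (A : Matrix m n ℝ) (s : Finset m) (v : n → ℝ) :
    l1MinRatio A s * ∑ k, |v k| ≤ ∑ j ∈ s, |(A *ᵥ v) j| := by
  rcases eq_or_ne v 0 with rfl | hv
  · simp
  have hnorm_pos : 0 < ∑ k, |v k| := by
    obtain ⟨k, hk⟩ := Function.ne_iff.mp hv
    exact sum_pos' (fun k _ => abs_nonneg _) ⟨k, mem_univ k, abs_pos.mpr hk⟩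
  rw [← le_div_iff₀ hnorm_pos]
  refine csInf_le ⟨0, ?_⟩ ⟨v, hv, rfl⟩
  rintro _ ⟨v, -, rfl⟩
  positivity

theorem dotProduct_mulVec_eq_sum_sq_div {𝕜 : Type*} [Field 𝕜] (A : Matrix m n 𝕜) (c : m → 𝕜)
    (s : Finset m) {H : Matrix n n 𝕜} (hH : ∀ k l, H k l = ∑ j ∈ s, A j k * A j l / c j)
    (w : n → 𝕜) : w ⬝ᵥ (H *ᵥ w) = ∑ j ∈ s, (A *ᵥ w) j ^ 2 / c j := by
  simp only [dotProduct, mulVec, hH, sq, sum_mul, mul_sum, sum_div]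
  symm
  rw [sum_comm]
  refine sum_congr rfl fun k _ => ?_
  rw [sum_comm]
  refine sum_congr rfl fun l _ => sum_congr rfl fun j _ => ?_
  ring

theorem l1MinRatio_sq_mul_sq_le_dotProduct_mulVec (A : Matrix m n ℝ) {c : m → ℝ}
    {s : Finset m} (hc_pos : ∀ j ∈ s, 0 < c j) (hc_sum : ∑ j ∈ s, c j = 1)
    {H : Matrix n n ℝ} (hH : ∀ k l, H k l = ∑ j ∈ s, A j k * A j l / c j) (w : n → ℝ) :
    l1MinRatio A s ^ 2 * (∑ k, |w k|) ^ 2 ≤ w ⬝ᵥ (H *ᵥ w) := by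
  have hsedrakyan := sq_sum_div_le_sum_sq_div s (fun j => |(A *ᵥ w) j|) (g := c) hc_pos
  simp only [hc_sum, div_one, sq_abs] at hsedrakyan
  rw [dotProduct_mulVec_eq_sum_sq_div A c s hH, ← mul_pow]
  refine le_trans ?_ hsedrakyan
  gcongr
  · exact mul_nonneg (l1MinRatio_nonneg A s) (sum_nonneg fun k _ => abs_nonneg _)
  · exact l1MinRatio_mul_le A s w

theorem dotProduct_mul_self_mulVec_inv_mulVec [DecidableEq n] {α : Type*} [CommRing α]
    {R : Matrix n n α} (hR : R.IsSymm) (hdet : IsUnit R.det) (u : n → α) :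
    (R⁻¹ *ᵥ u) ⬝ᵥ ((R * R) *ᵥ (R⁻¹ *ᵥ u)) = u ⬝ᵥ u := by
  have hRw : R *ᵥ (R⁻¹ *ᵥ u) = u := by
    rw [mulVec_mulVec, mul_nonsing_inv R hdet, one_mulVec]
  rw [← mulVec_mulVec, hRw, dotProduct_mulVec, ← mulVec_transpose, hR.eq, hRw]

end Matrix

theorem inv_sqrt_l1_bound_general {p K : ℕ} (A : Matrix (Fin p) (Fin K) ℝ)
    (Pi : Fin p → ℝ) (Jbar : Finset (Fin p))
    (hPipos : ∀ j ∈ Jbar, 0 < Pi j) (hPi1 : ∑ j ∈ Jbar, Pi j = 1)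
    (H : Matrix (Fin K) (Fin K) ℝ)
    (hH : ∀ k l, H k l = ∑ j ∈ Jbar, A j k * A j l / Pi j)
    (κ : ℝ)
    (hκ : κ = sInf {y | ∃ v : Fin K → ℝ, v ≠ 0 ∧
        y = (∑ j ∈ Jbar, |∑ k, A j k * v k|) / (∑ k, |v k|)})
    (hκpos : 0 < κ)
    (R : Matrix (Fin K) (Fin K) ℝ) (hR : R.PosDef) (hRR : R * R = H)
    (u : Fin K → ℝ) :
    ∑ k, |(R⁻¹ *ᵥ u) k| ≤ κ⁻¹ * Real.sqrt (∑ k, (u k) ^ 2) := by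
  change κ = l1MinRatio A Jbar at hκ
  have hquad : (R⁻¹ *ᵥ u) ⬝ᵥ (H *ᵥ (R⁻¹ *ᵥ u)) = ∑ k, u k ^ 2 := by
    rw [← hRR, dotProduct_mul_self_mulVec_inv_mulVec (isHermitian_iff_isSymm.mp hR.isHermitian)
      (isUnit_iff_ne_zero.mpr hR.det_pos.ne')]
    simp only [dotProduct, sq]
  have hsq := l1MinRatio_sq_mul_sq_le_dotProduct_mulVec A hPipos hPi1 hH (R⁻¹ *ᵥ u)
  rw [← hκ, hquad, ← mul_pow] at hsq
  exact (le_inv_mul_iff₀ hκpos).mpr (Real.le_sqrt_of_sq_le hsq)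

/-- `‖H^{-1/2} u‖₁ ≤ κ⁻¹ ‖u‖₂` where `H = ∑_{j∈J̄} Π_j⁻¹ A_{j·}A_{j·}^⊤`
is invertible, `R` is its positive definite square root and
`κ = min_{v ≠ 0} ‖A_{J̄} v‖₁/‖v‖₁ > 0`. -/
theorem inv_sqrt_l1_bound {p K : ℕ} (A : Matrix (Fin p) (Fin K) ℝ)
    (Pi : Fin p → ℝ) (Jbar : Finset (Fin p))
    (hPipos : ∀ j ∈ Jbar, 0 < Pi j) (hPi1 : ∑ j ∈ Jbar, Pi j = 1)
    (H : Matrix (Fin K) (Fin K) ℝ)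
    (hH : ∀ k l, H k l = ∑ j ∈ Jbar, A j k * A j l / Pi j)
    (hHinv : IsUnit H.det)
    (κ : ℝ)
    (hκ : κ = sInf {y | ∃ v : Fin K → ℝ, v ≠ 0 ∧
        y = (∑ j ∈ Jbar, |∑ k, A j k * v k|) / (∑ k, |v k|)})
    (hκpos : 0 < κ)
    (R : Matrix (Fin K) (Fin K) ℝ) (hR : R.PosDef) (hRR : R * R = H)
    (u : Fin K → ℝ) :
    ∑ k, |(R⁻¹ *ᵥ u) k| ≤ κ⁻¹ * Real.sqrt (∑ k, (u k) ^ 2) :=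
  inv_sqrt_l1_bound_general A Pi Jbar hPipos hPi1 H hH κ hκ hκpos R hR hRR u
end
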